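/- arXiv:2211.10389 — 2 statements merged into one kernel-verified Lean document; each statement's English description precedes it below -/
import Mathlib

section
/- There is a one-to-one correspondence between the N-particle basis Slater determinants and the excitation operators together with the identity: for every excitation multiindex μ ∈ ℐ there is a unique occupation vector k(μ) with exactly N entries equal to true and a sign ε(μ) ∈ {+1, −1} such that X_μ Φ_0 = ε(μ) · e_{k(μ)}; the map μ ↦ k(μ) is a bijection from ℐ onto the set of occupation vectors with exactly N true entries other than the reference occupation vector k₀. -/
set_option synthInstance.maxHeartbeats 1000000
set_option maxHeartbeats 1000000

namespace CC

abbrev FockSpace (K : ℕ) := (Fin K → Bool) → ℝ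

noncomputable def eVec (K : ℕ) (k : Fin K → Bool) : FockSpace K := Pi.single k 1

def nTrue (K : ℕ) (k : Fin K → Bool) : ℕ :=
  (Finset.univ.filter fun j => k j = true).card

def sgn (K : ℕ) (i : Fin K) (k : Fin K → Bool) : ℝ :=
  (-1 : ℝ) ^ (Finset.univ.filter fun j => j < i ∧ k j = true).card

noncomputable def creOp (K : ℕ) (i : Fin K) : Module.End ℝ (FockSpace K) where
  toFun f := fun m =>
    if m i = true then
      sgn K i (Function.update m i false) * f (Function.update m i false)
    else 0
  map_add' f g := by
    funext m
    by_cases h : m i = true <;> simp [h, mul_add]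
  map_smul' c f := by
    funext m
    by_cases h : m i = true <;> simp [h] <;> ring

noncomputable def annOp (K : ℕ) (i : Fin K) : Module.End ℝ (FockSpace K) where
  toFun f := fun m =>
    if m i = true then 0
    else sgn K i m * f (Function.update m i true)
  map_add' f g := by
    funext m
    by_cases h : m i = true <;> simp [h, mul_add]
  map_smul' c f := by
    funext m
    by_cases h : m i = true <;> simp [h] <;> ring

structure ExIdx (K N : ℕ) where
  r : ℕ
  r_pos : 1 ≤ r
  r_le : r ≤ N
  occ : Fin r → Fin K
  vir : Fin r → Fin K
  occ_mono : StrictMono occ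
  vir_mono : StrictMono vir
  occ_lt : ∀ j, ((occ j : Fin K) : ℕ) < N
  vir_ge : ∀ j, N ≤ ((vir j : Fin K) : ℕ)

noncomputable def excOp (K N : ℕ) (μ : ExIdx K N) : Module.End ℝ (FockSpace K) :=
  (List.ofFn fun j => creOp K (μ.vir j)).prod *
    ((List.ofFn fun j => annOp K (μ.occ j)).reverse).prod

noncomputable def dexcOp (K N : ℕ) (μ : ExIdx K N) : Module.End ℝ (FockSpace K) :=
  (List.ofFn fun j => creOp K (μ.occ j)).prod *
    ((List.ofFn fun j => annOp K (μ.vir j)).reverse).prod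

noncomputable def Hspace (K N : ℕ) : Submodule ℝ (FockSpace K) :=
  Submodule.span ℝ {f | ∃ k : Fin K → Bool, nTrue K k = N ∧ f = eVec K k}

def refOcc (K N : ℕ) : Fin K → Bool := fun j => decide ((j : ℕ) < N)

noncomputable def refVec (K N : ℕ) : FockSpace K := eVec K (refOcc K N)

abbrev ExcInvariant (K N : ℕ) : Prop :=
  ∀ μ : ExIdx K N, ∀ x ∈ Hspace K N, excOp K N μ x ∈ Hspace K N

noncomputable def excResL (K N : ℕ) (hX : ExcInvariant K N) (μ : ExIdx K N) :
    Hspace K N →L[ℝ] Hspace K N :=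
  LinearMap.toContinuousLinearMap ((excOp K N μ).restrict (hX μ))

noncomputable def clusterSpace (K N : ℕ) (hX : ExcInvariant K N) :
    Submodule ℝ (Hspace K N →L[ℝ] Hspace K N) :=
  Submodule.span ℝ (Set.range (excResL K N hX))

noncomputable def Gset (K N : ℕ) (hX : ExcInvariant K N) :
    Set (Hspace K N →L[ℝ] Hspace K N) :=
  {G | ∃ C ∈ clusterSpace K N hX, G = 1 + C}

noncomputable def ip (K : ℕ) (f g : FockSpace K) : ℝ :=
  ∑ k : Fin K → Bool, f k * g k

lemma nTrue_refOcc (K N : ℕ) (h : N ≤ K) : nTrue K (refOcc K N) = N := by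
  unfold nTrue refOcc
  have : (Finset.univ.filter fun j : Fin K => decide ((j : ℕ) < N) = true)
      = Finset.map (Fin.castLEEmb h) Finset.univ := by
    ext j
    simp only [Finset.mem_filter, Finset.mem_univ, true_and, decide_eq_true_eq,
      Finset.mem_map, Fin.castLEEmb_apply]
    constructor
    · intro hj
      exact ⟨⟨(j : ℕ), hj⟩, by ext; simp⟩
    · rintro ⟨i, -, rfl⟩
      simpa using i.isLt
  rw [this]
  simp

lemma refVec_mem (K N : ℕ) (h : N ≤ K) : refVec K N ∈ Hspace K N :=
  Submodule.subset_span ⟨refOcc K N, nTrue_refOcc K N h, rfl⟩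

noncomputable def refState (K N : ℕ) (h : N ≤ K) : Hspace K N :=
  ⟨refVec K N, refVec_mem K N h⟩

noncomputable instance instTopRingCLM (K N : ℕ) :
    IsTopologicalRing (Hspace K N →L[ℝ] Hspace K N) := by
  exact @NonUnitalSeminormedRing.toIsTopologicalRing (Hspace K N →L[ℝ] Hspace K N) _

noncomputable def expE (K N : ℕ) (T : Hspace K N →L[ℝ] Hspace K N) :
    Hspace K N →L[ℝ] Hspace K N :=
  NormedSpace.exp T



section Aux3

lemma eVec_apply (K : ℕ) (k m : Fin K → Bool) : eVec K k m = if m = k then 1 else 0 :=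
  Pi.single_apply k 1 m

lemma sgn_cases (K : ℕ) (i : Fin K) (k : Fin K → Bool) : sgn K i k = 1 ∨ sgn K i k = -1 := by
  unfold sgn
  rcases Nat.even_or_odd ((Finset.univ.filter fun j => j < i ∧ k j = true).card) with h | h
  · exact Or.inl h.neg_one_pow
  · exact Or.inr h.neg_one_pow

lemma annOp_eVec (K : ℕ) (i : Fin K) (k : Fin K → Bool) (h : k i = true) :
    annOp K i (eVec K k) =
      sgn K i (Function.update k i false) • eVec K (Function.update k i false) := by
  funext m
  simp only [annOp, LinearMap.coe_mk, AddHom.coe_mk, Pi.smul_apply, smul_eq_mul, eVec_apply]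
  by_cases hm : m = Function.update k i false
  · subst hm
    have h2 : Function.update (Function.update k i false) i true = k := by
      funext j; rcases eq_or_ne j i with rfl | hj
      · simp [h]
      · simp [Function.update_of_ne hj]
    rw [if_neg (by simp), if_pos h2, if_pos rfl]
  · rw [if_neg hm, mul_zero]
    by_cases hmi : m i = true
    · rw [if_pos hmi]
    · rw [if_neg hmi, if_neg, mul_zero]
      intro hc
      apply hm
      funext j; rcases eq_or_ne j i with rfl | hj
      · rw [Bool.not_eq_true] at hmi; simp [hmi]
      · have := congrFun hc j
        rw [Function.update_of_ne hj] at this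
        rw [Function.update_of_ne hj, this]

lemma creOp_eVec (K : ℕ) (i : Fin K) (k : Fin K → Bool) (h : k i = false) :
    creOp K i (eVec K k) = sgn K i k • eVec K (Function.update k i true) := by
  funext m
  simp only [creOp, LinearMap.coe_mk, AddHom.coe_mk, Pi.smul_apply, smul_eq_mul, eVec_apply]
  by_cases hm : m = Function.update k i true
  · subst hm
    have h2 : Function.update (Function.update k i true) i false = k := by
      funext j; rcases eq_or_ne j i with rfl | hj
      · simp [h]
      · simp [Function.update_of_ne hj]
    rw [if_pos (by simp), h2, if_pos rfl, if_pos rfl]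
  · rw [if_neg hm, mul_zero]
    by_cases hmi : m i = true
    · rw [if_pos hmi, if_neg, mul_zero]
      intro hc
      apply hm
      funext j; rcases eq_or_ne j i with rfl | hj
      · simp [hmi]
      · have := congrFun hc j
        rw [Function.update_of_ne hj] at this
        rw [Function.update_of_ne hj, this]
    · rw [if_neg hmi]

/-- set indices in `L` to false -/
def setF (K : ℕ) (L : List (Fin K)) (k : Fin K → Bool) : Fin K → Bool :=
  fun j => if j ∈ L then false else k j

/-- set indices in `L` to true -/
def setT (K : ℕ) (L : List (Fin K)) (k : Fin K → Bool) : Fin K → Bool :=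
  fun j => if j ∈ L then true else k j

lemma ann_chain (K : ℕ) (L : List (Fin K)) (k : Fin K → Bool) (hnd : L.Nodup)
    (h : ∀ i ∈ L, k i = true) :
    ∃ s : ℝ, (s = 1 ∨ s = -1) ∧
      ((L.map (annOp K)).reverse.prod) (eVec K k) = s • eVec K (setF K L k) := by
  induction L generalizing k with
  | nil =>
    have hk : setF K [] k = k := by funext j; simp [setF]
    exact ⟨1, Or.inl rfl, by simp [hk]⟩
  | cons i L' ih =>
    have hiL : i ∉ L' := (List.nodup_cons.mp hnd).1
    have hnd' := (List.nodup_cons.mp hnd).2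
    have hki : k i = true := h i (List.mem_cons_self)
    have step : ((i :: L').map (annOp K)).reverse.prod (eVec K k)
        = ((L'.map (annOp K)).reverse.prod) (annOp K i (eVec K k)) := by
      simp only [List.map_cons, List.reverse_cons, List.prod_append, List.prod_cons,
        List.prod_nil, mul_one, Module.End.mul_apply]
    obtain ⟨s', hs', hres⟩ := ih (Function.update k i false) hnd' (fun j hj => by
      have hji : j ≠ i := by rintro rfl; exact hiL hj
      rw [Function.update_of_ne hji]
      exact h j (List.mem_cons_of_mem i hj))
    have hfun : setF K L' (Function.update k i false) = setF K (i :: L') k := by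
      funext j
      by_cases hj : j ∈ L'
      · simp [setF, hj]
      · rcases eq_or_ne j i with rfl | hji
        · simp [setF, hj]
        · simp [setF, hj, hji, Function.update_of_ne hji]
    refine ⟨sgn K i (Function.update k i false) * s', ?_, ?_⟩
    · rcases sgn_cases K i (Function.update k i false) with h1 | h1 <;>
        rcases hs' with h2 | h2 <;> simp [h1, h2]
    · rw [step, annOp_eVec K i k hki, map_smul, hres, smul_smul, hfun]

lemma cre_chain (K : ℕ) (L : List (Fin K)) (k : Fin K → Bool) (hnd : L.Nodup)
    (h : ∀ i ∈ L, k i = false) :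
    ∃ s : ℝ, (s = 1 ∨ s = -1) ∧
      ((L.map (creOp K)).prod) (eVec K k) = s • eVec K (setT K L k) := by
  induction L with
  | nil =>
    have hk : setT K [] k = k := by funext j; simp [setT]
    exact ⟨1, Or.inl rfl, by simp [hk]⟩
  | cons i L' ih =>
    have hiL : i ∉ L' := (List.nodup_cons.mp hnd).1
    have hnd' := (List.nodup_cons.mp hnd).2
    obtain ⟨s', hs', hres⟩ := ih hnd' (fun j hj => h j (List.mem_cons_of_mem i hj))
    have step : ((i :: L').map (creOp K)).prod (eVec K k)
        = creOp K i (((L'.map (creOp K)).prod) (eVec K k)) := by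
      simp only [List.map_cons, List.prod_cons, Module.End.mul_apply]
    have hkT : setT K L' k i = false := by
      simp only [setT, if_neg hiL]
      exact h i (List.mem_cons_self)
    have hfun : Function.update (setT K L' k) i true = setT K (i :: L') k := by
      funext j
      rcases eq_or_ne j i with rfl | hji
      · simp [setT]
      · by_cases hj : j ∈ L' <;> simp [setT, hj, hji, Function.update_of_ne hji]
    refine ⟨s' * sgn K i (setT K L' k), ?_, ?_⟩
    · rcases sgn_cases K i (setT K L' k) with h1 | h1 <;>
        rcases hs' with h2 | h2 <;> simp [h1, h2]
    · rw [step, hres, map_smul, creOp_eVec K i _ hkT, smul_smul, hfun]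

/-- the occupation vector produced by an excitation -/
def kkFun (K N : ℕ) (μ : ExIdx K N) : Fin K → Bool :=
  setT K (List.ofFn μ.vir) (setF K (List.ofFn μ.occ) (refOcc K N))

lemma mem_ofFn_iff {K r : ℕ} (f : Fin r → Fin K) (j : Fin K) :
    j ∈ List.ofFn f ↔ j ∈ Finset.univ.image f := by
  rw [List.mem_ofFn]
  simp [Set.mem_range, eq_comm]

lemma exc_refVec (K N : ℕ) (μ : ExIdx K N) :
    ∃ s : ℝ, (s = 1 ∨ s = -1) ∧
      excOp K N μ (refVec K N) = s • eVec K (kkFun K N μ) := by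
  have hOcc : ∀ i ∈ List.ofFn μ.occ, refOcc K N i = true := by
    intro i hi
    rw [List.mem_ofFn] at hi
    obtain ⟨j, rfl⟩ := hi
    simp only [refOcc, decide_eq_true_eq]
    exact μ.occ_lt j
  obtain ⟨s1, hs1, h1⟩ := ann_chain K (List.ofFn μ.occ) (refOcc K N)
    (List.nodup_ofFn.mpr μ.occ_mono.injective) hOcc
  have hVir : ∀ i ∈ List.ofFn μ.vir, setF K (List.ofFn μ.occ) (refOcc K N) i = false := by
    intro i hi
    rw [List.mem_ofFn] at hi
    obtain ⟨j, rfl⟩ := hi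
    have hnm : μ.vir j ∉ List.ofFn μ.occ := by
      rw [List.mem_ofFn]
      rintro ⟨l, hl⟩
      exact absurd (hl ▸ μ.occ_lt l) (not_lt.mpr (μ.vir_ge j))
    simp only [setF, if_neg hnm, refOcc, decide_eq_false_iff_not, not_lt]
    exact μ.vir_ge j
  obtain ⟨s2, hs2, h2⟩ := cre_chain K (List.ofFn μ.vir) _
    (List.nodup_ofFn.mpr μ.vir_mono.injective) hVir
  refine ⟨s2 * s1, by rcases hs1 with h | h <;> rcases hs2 with h' | h' <;> simp [h, h'], ?_⟩
  have e1 : (List.ofFn fun j => annOp K (μ.occ j)) = (List.ofFn μ.occ).map (annOp K) := by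
    rw [List.map_ofFn]; rfl
  have e2 : (List.ofFn fun j => creOp K (μ.vir j)) = (List.ofFn μ.vir).map (creOp K) := by
    rw [List.map_ofFn]; rfl
  show (excOp K N μ) (refVec K N) = _
  unfold excOp
  rw [e1, e2, Module.End.mul_apply]
  show ((List.ofFn μ.vir).map (creOp K)).prod
      ((((List.ofFn μ.occ).map (annOp K)).reverse).prod (eVec K (refOcc K N))) = _
  rw [h1, map_smul, h2, smul_smul, mul_comm]
  rfl

lemma nTrue_kkFun (K N : ℕ) (hK : N ≤ K) (μ : ExIdx K N) : nTrue K (kkFun K N μ) = N := by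
  classical
  have hVmem : ∀ j : Fin K, j ∈ List.ofFn μ.vir ↔ j ∈ Finset.univ.image μ.vir :=
    mem_ofFn_iff _
  have hOmem : ∀ j : Fin K, j ∈ List.ofFn μ.occ ↔ j ∈ Finset.univ.image μ.occ :=
    mem_ofFn_iff _
  have hset : Finset.univ.filter (fun j => kkFun K N μ j = true) =
      (Finset.univ.image μ.vir) ∪
        ((Finset.univ.filter fun j : Fin K => (j : ℕ) < N) \ Finset.univ.image μ.occ) := by
    ext j
    simp only [Finset.mem_filter, Finset.mem_univ, true_and, Finset.mem_union,
      Finset.mem_sdiff, Finset.mem_filter, true_and]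
    by_cases hv : j ∈ List.ofFn μ.vir
    · simp only [kkFun, setT, if_pos hv]
      simp [(hVmem j).mp hv]
    · have hjv : j ∉ Finset.univ.image μ.vir := fun hc => hv ((hVmem j).mpr hc)
      simp only [kkFun, setT, if_neg hv]
      by_cases ho : j ∈ List.ofFn μ.occ
      · simp only [setF, if_pos ho]
        simp [hjv, (hOmem j).mp ho]
      · have hjo : j ∉ Finset.univ.image μ.occ := fun hc => ho ((hOmem j).mpr hc)
        simp only [setF, if_neg ho, refOcc]
        simp [hjv, hjo]
  have hVcard : (Finset.univ.image μ.vir).card = μ.r := by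
    rw [Finset.card_image_of_injective _ μ.vir_mono.injective, Finset.card_univ,
      Fintype.card_fin]
  have hOcard : (Finset.univ.image μ.occ).card = μ.r := by
    rw [Finset.card_image_of_injective _ μ.occ_mono.injective, Finset.card_univ,
      Fintype.card_fin]
  have hOsub : Finset.univ.image μ.occ ⊆ Finset.univ.filter (fun j : Fin K => (j : ℕ) < N) := by
    intro j hj
    rw [Finset.mem_image] at hj
    obtain ⟨l, -, rfl⟩ := hj
    simp [μ.occ_lt l]
  have hRcard : (Finset.univ.filter (fun j : Fin K => (j : ℕ) < N)).card = N := by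
    have h1 := nTrue_refOcc K N hK
    unfold nTrue refOcc at h1
    have h0 : (Finset.univ.filter (fun j : Fin K => (j : ℕ) < N)) =
        (Finset.univ.filter fun j : Fin K => decide ((j : ℕ) < N) = true) := by
      ext j; simp
    rw [h0]
    convert h1 using 2
  have hdisj : Disjoint (Finset.univ.image μ.vir)
      ((Finset.univ.filter fun j : Fin K => (j : ℕ) < N) \ Finset.univ.image μ.occ) := by
    rw [Finset.disjoint_left]
    intro j hj hj2
    rw [Finset.mem_image] at hj
    obtain ⟨l, -, rfl⟩ := hj
    rw [Finset.mem_sdiff, Finset.mem_filter] at hj2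
    exact absurd hj2.1.2 (not_lt.mpr (μ.vir_ge l))
  unfold nTrue
  rw [hset, Finset.card_union_of_disjoint hdisj, hVcard, Finset.card_sdiff_of_subset hOsub,
    hOcard, hRcard]
  have := μ.r_le
  omega

lemma mem_vir_iff (K N : ℕ) (μ : ExIdx K N) (j : Fin K) :
    j ∈ List.ofFn μ.vir ↔ (kkFun K N μ j = true ∧ N ≤ (j : ℕ)) := by
  constructor
  · intro hv
    refine ⟨by simp only [kkFun, setT, if_pos hv], ?_⟩
    rw [List.mem_ofFn] at hv
    obtain ⟨l, rfl⟩ := hv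
    exact μ.vir_ge l
  · rintro ⟨ht, hge⟩
    by_contra hv
    have ho : j ∉ List.ofFn μ.occ := by
      rw [List.mem_ofFn]
      rintro ⟨l, rfl⟩
      exact absurd (μ.occ_lt l) (not_lt.mpr hge)
    simp only [kkFun, setT, if_neg hv, setF, if_neg ho, refOcc, decide_eq_true_eq] at ht
    exact absurd ht (not_lt.mpr hge)

lemma mem_occ_iff (K N : ℕ) (μ : ExIdx K N) (j : Fin K) :
    j ∈ List.ofFn μ.occ ↔ (kkFun K N μ j = false ∧ (j : ℕ) < N) := by
  constructor
  · intro ho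
    have hlt : (j : ℕ) < N := by
      rw [List.mem_ofFn] at ho
      obtain ⟨l, rfl⟩ := ho
      exact μ.occ_lt l
    have hv : j ∉ List.ofFn μ.vir := by
      rw [List.mem_ofFn]
      rintro ⟨l, rfl⟩
      exact absurd hlt (not_lt.mpr (μ.vir_ge l))
    exact ⟨by simp only [kkFun, setT, if_neg hv, setF, if_pos ho], hlt⟩
  · rintro ⟨hf, hlt⟩
    by_contra ho
    have hv : j ∉ List.ofFn μ.vir := by
      rw [List.mem_ofFn]
      rintro ⟨l, rfl⟩
      exact absurd hlt (not_lt.mpr (μ.vir_ge l))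
    simp only [kkFun, setT, if_neg hv, setF, if_neg ho, refOcc, decide_eq_false_iff_not,
      not_lt] at hf
    exact absurd hf (not_le.mpr hlt)

end Aux3

/-- one-to-one correspondence between excitation operators (together with
the identity) and the N-particle basis Slater determinants. -/
theorem basis_operator_bijection (K N : ℕ) (hN : 0 < N) (hK : N < K) :
    ∃ kk : ExIdx K N → (Fin K → Bool), ∃ sg : ExIdx K N → ℝ,
      (∀ μ : ExIdx K N,
        nTrue K (kk μ) = N ∧ (sg μ = 1 ∨ sg μ = -1) ∧
        excOp K N μ (refVec K N) = sg μ • eVec K (kk μ) ∧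
        (∀ (k' : Fin K → Bool) (ε' : ℝ), (ε' = 1 ∨ ε' = -1) →
          excOp K N μ (refVec K N) = ε' • eVec K k' → k' = kk μ)) ∧
      Set.BijOn kk Set.univ
        {k : Fin K → Bool | nTrue K k = N ∧ k ≠ refOcc K N} := by
  classical
  have hKle : N ≤ K := le_of_lt hK
  refine ⟨kkFun K N, fun μ => Classical.choose (exc_refVec K N μ), fun μ => ?_, ?_, ?_, ?_⟩
  · -- main properties
    obtain ⟨hs, heq⟩ := Classical.choose_spec (exc_refVec K N μ)
    refine ⟨nTrue_kkFun K N hKle μ, hs, heq, ?_⟩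
    intro k' ε' hε' heq'
    by_contra hne
    have hcmp := heq.symm.trans heq'
    have hval := congrFun hcmp k'
    rw [Pi.smul_apply, Pi.smul_apply, smul_eq_mul, smul_eq_mul, eVec_apply, eVec_apply,
      if_neg hne, if_pos rfl, mul_zero, mul_one] at hval
    rcases hε' with h | h <;> rw [h] at hval <;> norm_num at hval
  · -- MapsTo
    intro μ _
    refine ⟨nTrue_kkFun K N hKle μ, ?_⟩
    intro hc
    have h0 : (0 : ℕ) < μ.r := μ.r_pos
    have hmem : μ.vir ⟨0, h0⟩ ∈ List.ofFn μ.vir := List.mem_ofFn.mpr ⟨⟨0, h0⟩, rfl⟩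
    have hj : kkFun K N μ (μ.vir ⟨0, h0⟩) = true := by
      simp [kkFun, setT, if_pos hmem]
    rw [hc] at hj
    simp only [refOcc, decide_eq_true_eq] at hj
    exact absurd hj (not_lt.mpr (μ.vir_ge _))
  · -- InjOn
    intro μ _ μ' _ hEq
    have hoccset : Finset.univ.image μ.occ = Finset.univ.image μ'.occ := by
      ext j
      rw [← mem_ofFn_iff, ← mem_ofFn_iff, mem_occ_iff, mem_occ_iff, hEq]
    have hvirset : Finset.univ.image μ.vir = Finset.univ.image μ'.vir := by
      ext j
      rw [← mem_ofFn_iff, ← mem_ofFn_iff, mem_vir_iff, mem_vir_iff, hEq]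
    have hc1 : (Finset.univ.image μ.occ).card = μ.r := by
      rw [Finset.card_image_of_injective _ μ.occ_mono.injective, Finset.card_univ,
        Fintype.card_fin]
    have hc2 : (Finset.univ.image μ'.occ).card = μ'.r := by
      rw [Finset.card_image_of_injective _ μ'.occ_mono.injective, Finset.card_univ,
        Fintype.card_fin]
    have hr : μ.r = μ'.r := by rw [← hc1, hoccset, hc2]
    obtain ⟨r, rp, rle, occ, vir, om, vm, ol, vg⟩ := μ
    obtain ⟨r', rp', rle', occ', vir', om', vm', ol', vg'⟩ := μ'
    simp only at hr hoccset hvirset hc2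
    subst hr
    have hocc : occ = occ' := by
      have hmem1 : ∀ x, occ x ∈ Finset.univ.image occ' := by
        intro x
        rw [← hoccset]
        exact Finset.mem_image_of_mem occ (Finset.mem_univ x)
      have hmem2 : ∀ x, occ' x ∈ Finset.univ.image occ' :=
        fun x => Finset.mem_image_of_mem occ' (Finset.mem_univ x)
      exact (Finset.orderEmbOfFin_unique hc2 hmem1 om).trans
        (Finset.orderEmbOfFin_unique hc2 hmem2 om').symm
    have hc2v : (Finset.univ.image vir').card = r := by
      rw [Finset.card_image_of_injective _ vm'.injective, Finset.card_univ, Fintype.card_fin]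
    have hvir : vir = vir' := by
      have hmem1 : ∀ x, vir x ∈ Finset.univ.image vir' := by
        intro x
        rw [← hvirset]
        exact Finset.mem_image_of_mem vir (Finset.mem_univ x)
      have hmem2 : ∀ x, vir' x ∈ Finset.univ.image vir' :=
        fun x => Finset.mem_image_of_mem vir' (Finset.mem_univ x)
      exact (Finset.orderEmbOfFin_unique hc2v hmem1 vm).trans
        (Finset.orderEmbOfFin_unique hc2v hmem2 vm').symm
    subst hocc
    subst hvir
    rfl
  · -- SurjOn
    rintro k ⟨hkN, hkne⟩
    set S := Finset.univ.filter (fun j : Fin K => (j : ℕ) < N ∧ k j = false) with hS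
    set T := Finset.univ.filter (fun j : Fin K => N ≤ (j : ℕ) ∧ k j = true) with hT
    set A := Finset.univ.filter (fun j : Fin K => (j : ℕ) < N ∧ k j = true) with hA
    have hAT : (Finset.univ.filter fun j : Fin K => k j = true) = A ∪ T := by
      ext j
      simp only [hA, hT, Finset.mem_filter, Finset.mem_univ, true_and, Finset.mem_union]
      constructor
      · intro hj
        rcases lt_or_ge ((j : ℕ)) N with h | h
        · exact Or.inl ⟨h, hj⟩
        · exact Or.inr ⟨h, hj⟩
      · rintro (⟨-, hj⟩ | ⟨-, hj⟩) <;> exact hj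
    have hdisjAT : Disjoint A T := by
      rw [Finset.disjoint_left]
      intro j hj hj'
      rw [hA, Finset.mem_filter] at hj
      rw [hT, Finset.mem_filter] at hj'
      omega
    have hAS : (Finset.univ.filter fun j : Fin K => (j : ℕ) < N) = A ∪ S := by
      ext j
      simp only [hA, hS, Finset.mem_filter, Finset.mem_univ, true_and, Finset.mem_union]
      constructor
      · intro hj
        cases hb : k j
        · exact Or.inr ⟨hj, rfl⟩
        · exact Or.inl ⟨hj, rfl⟩
      · rintro (⟨hj, -⟩ | ⟨hj, -⟩) <;> exact hj
    have hdisjAS : Disjoint A S := by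
      rw [Finset.disjoint_left]
      intro j hj hj'
      rw [hA, Finset.mem_filter] at hj
      rw [hS, Finset.mem_filter] at hj'
      rw [hj.2.2] at hj'
      exact absurd hj'.2.2 (by simp)
    have hRcard : (Finset.univ.filter (fun j : Fin K => (j : ℕ) < N)).card = N := by
      have h1 := nTrue_refOcc K N hKle
      unfold nTrue refOcc at h1
      have h0 : (Finset.univ.filter (fun j : Fin K => (j : ℕ) < N)) =
          (Finset.univ.filter fun j : Fin K => decide ((j : ℕ) < N) = true) := by
        ext j; simp
      rw [h0]
      convert h1 using 2
    have hsum1 : A.card + T.card = N := by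
      have := hkN
      unfold nTrue at this
      rw [hAT, Finset.card_union_of_disjoint hdisjAT] at this
      exact this
    have hsum2 : A.card + S.card = N := by
      rw [← hRcard, hAS, Finset.card_union_of_disjoint hdisjAS]
    have hTS : T.card = S.card := by omega
    have hr1 : 1 ≤ S.card := by
      rcases Nat.eq_zero_or_pos S.card with h0 | h0
      · exfalso
        apply hkne
        have hS0 : S = ∅ := Finset.card_eq_zero.mp h0
        have hT0 : T = ∅ := Finset.card_eq_zero.mp (by omega)
        funext j
        by_cases hj : (j : ℕ) < N
        · have hjS : j ∉ S := by rw [hS0]; exact Finset.notMem_empty j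
          rw [hS, Finset.mem_filter] at hjS
          simp only [Finset.mem_univ, true_and, not_and] at hjS
          have := hjS hj
          rw [Bool.not_eq_false] at this
          simp [this, refOcc, hj]
        · have hjT : j ∉ T := by rw [hT0]; exact Finset.notMem_empty j
          rw [hT, Finset.mem_filter] at hjT
          simp only [Finset.mem_univ, true_and, not_and] at hjT
          have := hjT (le_of_not_gt hj)
          rw [Bool.not_eq_true] at this
          simp [this, refOcc, hj]
      · exact h0
    have hrN : S.card ≤ N := by omega
    have hTc : T.card = S.card := hTS
    refine ⟨⟨S.card, hr1, hrN, fun l => S.orderEmbOfFin rfl l, fun l => T.orderEmbOfFin hTc l,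
      (S.orderEmbOfFin rfl).strictMono, (T.orderEmbOfFin hTc).strictMono, ?_, ?_⟩,
      Set.mem_univ _, ?_⟩
    · intro l
      have := Finset.mem_filter.mp (Finset.orderEmbOfFin_mem S rfl l)
      exact this.2.1
    · intro l
      have := Finset.mem_filter.mp (Finset.orderEmbOfFin_mem T hTc l)
      exact this.2.1
    · -- kkFun μ = k
      have hvmem : ∀ j : Fin K,
          (j ∈ List.ofFn fun l => T.orderEmbOfFin hTc l) ↔ j ∈ T := by
        intro j
        rw [List.mem_ofFn]
        constructor
        · rintro ⟨l, rfl⟩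
          exact Finset.orderEmbOfFin_mem T hTc l
        · intro hj
          have : j ∈ Set.range (T.orderEmbOfFin hTc) := by
            rw [Finset.range_orderEmbOfFin]
            exact hj
          obtain ⟨l, hl⟩ := this
          exact ⟨l, hl⟩
      have homem : ∀ j : Fin K,
          (j ∈ List.ofFn fun l => S.orderEmbOfFin rfl l) ↔ j ∈ S := by
        intro j
        rw [List.mem_ofFn]
        constructor
        · rintro ⟨l, rfl⟩
          exact Finset.orderEmbOfFin_mem S rfl l
        · intro hj
          have : j ∈ Set.range (S.orderEmbOfFin rfl) := by
            rw [Finset.range_orderEmbOfFin]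
            exact hj
          obtain ⟨l, hl⟩ := this
          exact ⟨l, hl⟩
      funext j
      show setT K _ (setF K _ (refOcc K N)) j = k j
      by_cases hv : j ∈ T
      · have hj1 : k j = true := by
          rw [hT, Finset.mem_filter] at hv
          exact hv.2.2
        rw [hj1]
        simp only [setT, if_pos ((hvmem j).mpr hv)]
      · have hv' : (j ∈ List.ofFn fun l => T.orderEmbOfFin hTc l) = False := by
          simp only [eq_iff_iff, iff_false]
          exact fun hc => hv ((hvmem j).mp hc)
        simp only [setT, hv', if_false]
        by_cases ho : j ∈ S
        · have hj0 : k j = false := by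
            rw [hS, Finset.mem_filter] at ho
            exact ho.2.2
          rw [hj0]
          simp only [setF, if_pos ((homem j).mpr ho)]
        · have ho' : (j ∈ List.ofFn fun l => S.orderEmbOfFin rfl l) = False := by
            simp only [eq_iff_iff, iff_false]
            exact fun hc => ho ((homem j).mp hc)
          simp only [setF, ho', if_false, refOcc]
          by_cases hj : (j : ℕ) < N
          · rw [hS, Finset.mem_filter] at ho
            simp only [Finset.mem_univ, true_and, not_and] at ho
            have := ho hj
            rw [Bool.not_eq_false] at this
            simp [this, hj]
          · rw [hT, Finset.mem_filter] at hv
            simp only [Finset.mem_univ, true_and, not_and] at hv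
            have := hv (le_of_not_gt hj)
            rw [Bool.not_eq_true] at this
            simp [this, hj]


end CC
end

section
/- The exponential image of the cluster algebra coincides with the affine wave-operator set: {exp(T) : T ∈ 𝔟} = {id_ℋ + C : C ∈ 𝔟} as subsets of End(ℋ). -/
set_option synthInstance.maxHeartbeats 1000000
set_option maxHeartbeats 1000000

namespace CC

-- ## AUXILIARY DEVELOPMENT
noncomputable def genOp (K : ℕ) (i : Fin K) (b : Bool) : Module.End ℝ (FockSpace K) where
  toFun f := fun m =>
    if m i = b then sgn K i m * f (Function.update m i (!b)) else 0
  map_add' f g := by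
    funext m; by_cases h : m i = b <;> simp [h, mul_add]
  map_smul' c f := by
    funext m; by_cases h : m i = b <;> simp [h] <;> ring

lemma genOp_apply (K : ℕ) (i : Fin K) (b : Bool) (f : FockSpace K) (m : Fin K → Bool) :
    genOp K i b f m = if m i = b then sgn K i m * f (Function.update m i (!b)) else 0 := rfl

lemma sgn_update_of_not_lt (K : ℕ) (i j : Fin K) (h : ¬ j < i) (k : Fin K → Bool) (b : Bool) :
    sgn K i (Function.update k j b) = sgn K i k := by
  unfold sgn
  congr 2
  ext a
  simp only [Finset.mem_filter, Finset.mem_univ, true_and, Function.update_apply]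
  by_cases ha : a = j
  · subst ha; simp only [if_pos rfl]
    constructor
    · rintro ⟨h1, _⟩; exact absurd h1 h
    · rintro ⟨h1, _⟩; exact absurd h1 h
  · simp [ha]

lemma sgn_update_self (K : ℕ) (i : Fin K) (k : Fin K → Bool) (b : Bool) :
    sgn K i (Function.update k i b) = sgn K i k :=
  sgn_update_of_not_lt K i i (lt_irrefl i) k b

lemma sgn_eq_prod (K : ℕ) (i : Fin K) (k : Fin K → Bool) :
    sgn K i k = ∏ a ∈ Finset.univ.filter (fun a => a < i),
      (if k a = true then (-1 : ℝ) else 1) := by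
  unfold sgn
  rw [← Finset.prod_const, ← Finset.prod_filter, Finset.filter_filter]

lemma sgn_update_of_lt (K : ℕ) (i j : Fin K) (h : j < i) (k : Fin K → Bool) :
    sgn K i (Function.update k j (!k j)) = - sgn K i k := by
  rw [sgn_eq_prod, sgn_eq_prod]
  have hmem : j ∈ Finset.univ.filter (fun a => a < i) := by simp [h]
  have hfun : (fun a => if Function.update k j (!k j) a = true then (-1 : ℝ) else 1)
      = Function.update (fun a => if k a = true then (-1 : ℝ) else 1) j
          (if (!k j) = true then (-1 : ℝ) else 1) := by
    funext a
    by_cases ha : a = j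
    · subst ha; simp
    · simp [Function.update_apply, ha]
  rw [hfun, Finset.prod_update_of_mem hmem, ← Finset.mul_prod_erase _ _ hmem]
  have : (if (!k j) = true then (-1 : ℝ) else 1) = - (if k j = true then (-1 : ℝ) else 1) := by
    cases k j <;> norm_num
  rw [this, Finset.sdiff_singleton_eq_erase]; ring

lemma genOp_mul_same (K : ℕ) (i : Fin K) (b : Bool) :
    genOp K i b * genOp K i b = 0 := by
  apply LinearMap.ext; intro f
  funext m
  show genOp K i b (genOp K i b f) m = 0
  rw [genOp_apply]
  split_ifs with h
  · rw [genOp_apply, Function.update_self]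
    simp [Bool.eq_not_self]
  · rfl

lemma genOp_anticomm (K : ℕ) (i j : Fin K) (hij : i ≠ j) (b c : Bool) :
    genOp K i b * genOp K j c = - (genOp K j c * genOp K i b) := by
  apply LinearMap.ext; intro f
  funext m
  show genOp K i b (genOp K j c f) m = - genOp K j c (genOp K i b f) m
  simp only [genOp_apply, Function.update_of_ne hij.symm, Function.update_of_ne hij]
  by_cases hi : m i = b
  · by_cases hj : m j = c
    · simp only [if_pos hi, if_pos hj]
      rw [Function.update_comm hij]
      have key : sgn K i m * sgn K j (Function.update m i (!b)) =
          - (sgn K j m * sgn K i (Function.update m j (!c))) := by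
        rcases lt_or_gt_of_ne hij with hlt | hlt
        · rw [sgn_update_of_not_lt K i j (not_lt_of_gt hlt)]
          rw [← hi, sgn_update_of_lt K j i hlt]
          ring
        · rw [sgn_update_of_not_lt K j i (not_lt_of_gt hlt)]
          rw [← hj, sgn_update_of_lt K i j hlt]
          ring
      calc sgn K i m * (sgn K j (Function.update m i (!b)) *
              f (Function.update (Function.update m j (!c)) i (!b)))
          = (sgn K i m * sgn K j (Function.update m i (!b))) *
              f (Function.update (Function.update m j (!c)) i (!b)) := by ring
        _ = - (sgn K j m * (sgn K i (Function.update m j (!c)) *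
              f (Function.update (Function.update m j (!c)) i (!b)))) := by rw [key]; ring
    · simp [hi, hj]
  · simp [hi]

noncomputable def opList (K : ℕ) (L : List (Fin K × Bool)) : Module.End ℝ (FockSpace K) :=
  (L.map fun p => genOp K p.1 p.2).prod

lemma opList_nil (K : ℕ) : opList K [] = 1 := rfl

lemma opList_cons (K : ℕ) (p : Fin K × Bool) (L : List (Fin K × Bool)) :
    opList K (p :: L) = genOp K p.1 p.2 * opList K L := by
  simp [opList]

lemma opList_append (K : ℕ) (A B : List (Fin K × Bool)) :
    opList K (A ++ B) = opList K A * opList K B := by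
  simp [opList]

lemma genOp_comm_opList (K : ℕ) (p : Fin K × Bool) (L : List (Fin K × Bool))
    (h : ∀ q ∈ L, q.1 ≠ p.1) :
    genOp K p.1 p.2 * opList K L
      = ((-1 : ℝ) ^ L.length) • (opList K L * genOp K p.1 p.2) := by
  induction L with
  | nil => simp [opList_nil]
  | cons q L ih =>
    have hq : q.1 ≠ p.1 := h q (List.mem_cons_self)
    have ih' := ih (fun r hr => h r (List.mem_cons_of_mem q hr))
    calc genOp K p.1 p.2 * opList K (q :: L)
        = (genOp K p.1 p.2 * genOp K q.1 q.2) * opList K L := by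
          rw [opList_cons, mul_assoc]
      _ = - (genOp K q.1 q.2 * (genOp K p.1 p.2 * opList K L)) := by
          rw [genOp_anticomm K p.1 q.1 (fun e => hq e.symm),
            neg_mul (genOp K q.1 q.2 * genOp K p.1 p.2) (opList K L), mul_assoc]
      _ = - (genOp K q.1 q.2 * ((-1 : ℝ) ^ L.length • (opList K L * genOp K p.1 p.2))) := by
          rw [ih']
      _ = ((-1 : ℝ) ^ (q :: L).length) • (opList K (q :: L) * genOp K p.1 p.2) := by
          rw [List.length_cons, pow_succ, opList_cons, mul_smul_comm]
          rw [mul_assoc]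
          module

lemma opList_swap (K : ℕ) (A B : List (Fin K × Bool))
    (h : ∀ p ∈ A, ∀ q ∈ B, p.1 ≠ q.1) :
    opList K (A ++ B) = ((-1 : ℝ) ^ (A.length * B.length)) • opList K (B ++ A) := by
  induction A with
  | nil => simp
  | cons p A ih =>
    have h1 : ∀ q ∈ B, q.1 ≠ p.1 :=
      fun q hq => (h p (List.mem_cons_self) q hq).symm
    have hsign : ((-1 : ℝ) ^ (A.length * B.length)) * ((-1 : ℝ) ^ B.length)
        = (-1 : ℝ) ^ ((p :: A).length * B.length) := by
      rw [← pow_add, List.length_cons]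
      congr 1
      ring
    calc opList K ((p :: A) ++ B)
        = genOp K p.1 p.2 * opList K (A ++ B) := by
          rw [List.cons_append, opList_cons]
      _ = genOp K p.1 p.2 * ((-1 : ℝ) ^ (A.length * B.length) • opList K (B ++ A)) := by
          rw [ih (fun r hr q hq => h r (List.mem_cons_of_mem p hr) q hq)]
      _ = (-1 : ℝ) ^ (A.length * B.length) • ((genOp K p.1 p.2 * opList K B) * opList K A) := by
          rw [mul_smul_comm, opList_append, mul_assoc]
      _ = (-1 : ℝ) ^ (A.length * B.length) • (((-1 : ℝ) ^ B.length • (opList K B * genOp K p.1 p.2)) * opList K A) := by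
          rw [genOp_comm_opList K p B h1]
      _ = ((-1 : ℝ) ^ ((p :: A).length * B.length)) • opList K (B ++ (p :: A)) := by
          rw [smul_mul_assoc, smul_smul, hsign, opList_append, opList_cons, mul_assoc]

lemma opList_zero_of_dup (K : ℕ) (p : Fin K × Bool)
    (L₁ L₂ L₃ : List (Fin K × Bool)) (h : ∀ q ∈ L₂, q.1 ≠ p.1) :
    opList K (L₁ ++ p :: L₂ ++ p :: L₃) = 0 := by
  have e1 : opList K (L₁ ++ p :: L₂ ++ p :: L₃)
      = opList K L₁ * ((genOp K p.1 p.2 * opList K L₂) * (genOp K p.1 p.2 * opList K L₃)) := by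
    rw [opList_append, opList_append, opList_cons, opList_cons]
    simp [mul_assoc]
  rw [e1, genOp_comm_opList K p L₂ h, smul_mul_assoc, mul_smul_comm]
  have e2 : (opList K L₂ * genOp K p.1 p.2) * (genOp K p.1 p.2 * opList K L₃)
      = opList K L₂ * ((genOp K p.1 p.2 * genOp K p.1 p.2) * opList K L₃) := by
    simp [mul_assoc]
  rw [e2, genOp_mul_same]
  simp

-- ### SECTION 3
lemma creOp_eq_genOp (K : ℕ) (i : Fin K) : creOp K i = genOp K i true := by
  apply LinearMap.ext; intro f
  funext m
  rw [genOp_apply]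
  show (if m i = true then sgn K i (Function.update m i false) * f (Function.update m i false) else 0) = _
  rw [sgn_update_self]
  rfl

lemma annOp_eq_genOp (K : ℕ) (i : Fin K) : annOp K i = genOp K i false := by
  apply LinearMap.ext; intro f
  funext m
  rw [genOp_apply]
  show (if m i = true then 0 else sgn K i m * f (Function.update m i true)) = _
  cases h : m i <;> simp [h]

def excList (K N : ℕ) (μ : ExIdx K N) : List (Fin K × Bool) :=
  (List.ofFn fun j => ((μ.vir j : Fin K), true))
    ++ (List.ofFn fun j => ((μ.occ j : Fin K), false)).reverse

lemma excOp_eq_opList (K N : ℕ) (μ : ExIdx K N) :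
    excOp K N μ = opList K (excList K N μ) := by
  unfold excOp excList opList
  rw [List.map_append, List.map_reverse, List.map_ofFn, List.map_ofFn, List.prod_append]
  congr 1
  · exact congrArg List.prod (congrArg List.ofFn (funext fun j => creOp_eq_genOp K (μ.vir j)))
  · exact congrArg List.prod (congrArg List.reverse
      (congrArg List.ofFn (funext fun j => annOp_eq_genOp K (μ.occ j))))

lemma excList_length (K N : ℕ) (μ : ExIdx K N) :
    (excList K N μ).length = μ.r + μ.r := by
  simp [excList]

lemma mem_excList (K N : ℕ) (μ : ExIdx K N) (p : Fin K × Bool) :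
    p ∈ excList K N μ ↔ (∃ j, p = (μ.vir j, true)) ∨ (∃ j, p = (μ.occ j, false)) := by
  simp [excList, List.mem_ofFn, eq_comm]

lemma excList_snd (K N : ℕ) (μ : ExIdx K N) (p : Fin K × Bool) (hp : p ∈ excList K N μ) :
    p.2 = decide (N ≤ (p.1 : ℕ)) := by
  rcases (mem_excList K N μ p).mp hp with ⟨j, rfl⟩ | ⟨j, rfl⟩
  · simp [μ.vir_ge j]
  · simp [Nat.not_le.mpr (μ.occ_lt j)]

lemma excList_fst_nodup (K N : ℕ) (μ : ExIdx K N) :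
    ((excList K N μ).map Prod.fst).Nodup := by
  unfold excList
  rw [List.map_append, List.map_reverse, List.map_ofFn, List.map_ofFn]
  rw [List.nodup_append]
  refine ⟨?_, ?_, ?_⟩
  · rw [List.nodup_ofFn]
    exact fun a b h => μ.vir_mono.injective h
  · rw [List.nodup_reverse, List.nodup_ofFn]
    exact fun a b h => μ.occ_mono.injective h
  · intro a ha b hb hab
    subst hab
    simp only [List.mem_ofFn, List.mem_reverse] at ha hb
    rcases ha with ⟨j, rfl⟩
    rcases hb with ⟨l, hl⟩
    have h1 := μ.vir_ge j
    have h2 := μ.occ_lt l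
    simp only [Function.comp] at hl
    rw [hl] at h2
    omega

-- ### SECTION 4 : commutation
lemma opList_mul_zero_of_shared (K : ℕ) (P Q : List (Fin K × Bool)) (p : Fin K × Bool)
    (hP : (P.map Prod.fst).Nodup) (hQ : (Q.map Prod.fst).Nodup)
    (hpP : p ∈ P) (hpQ : p ∈ Q) : opList K (P ++ Q) = 0 := by
  obtain ⟨A, B, rfl⟩ := List.append_of_mem hpP
  obtain ⟨C, D, rfl⟩ := List.append_of_mem hpQ
  have hB : p.1 ∉ B.map Prod.fst := by
    rw [List.map_append, List.map_cons] at hP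
    have h2 := (List.nodup_append.mp hP).2.1
    exact (List.nodup_cons.mp h2).1
  have hC : p.1 ∉ C.map Prod.fst := by
    rw [List.map_append, List.map_cons] at hQ
    have hdisj := (List.nodup_append.mp hQ).2.2
    intro hmem
    exact hdisj _ hmem _ List.mem_cons_self rfl
  have hmid : ∀ q ∈ B ++ C, q.1 ≠ p.1 := by
    intro q hq heq
    rcases List.mem_append.mp hq with h | h
    · exact hB (heq ▸ List.mem_map_of_mem h)
    · exact hC (heq ▸ List.mem_map_of_mem h)
  have hre : (A ++ p :: B) ++ (C ++ p :: D) = A ++ p :: (B ++ C) ++ p :: D := by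
    simp
  rw [hre]
  exact opList_zero_of_dup K p A (B ++ C) D hmid

theorem excOp_comm (K N : ℕ) (μ ν : ExIdx K N) :
    excOp K N μ * excOp K N ν = excOp K N ν * excOp K N μ := by
  rw [excOp_eq_opList, excOp_eq_opList, ← opList_append, ← opList_append]
  by_cases hd : ∀ p ∈ excList K N μ, ∀ q ∈ excList K N ν, p.1 ≠ q.1
  · rw [opList_swap K _ _ hd]
    have h1 : Even (excList K N μ).length := ⟨μ.r, excList_length K N μ⟩
    have hev : Even ((excList K N μ).length * (excList K N ν).length) := h1.mul_right _
    rw [hev.neg_one_pow, one_smul]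
  · push_neg at hd
    obtain ⟨p, hp, q, hq, heq⟩ := hd
    have hpq : p = q := by
      apply Prod.ext heq
      rw [excList_snd K N μ p hp, excList_snd K N ν q hq, heq]
    subst hpq
    rw [opList_mul_zero_of_shared K _ _ p (excList_fst_nodup K N μ) (excList_fst_nodup K N ν) hp hq,
      opList_mul_zero_of_shared K _ _ p (excList_fst_nodup K N ν) (excList_fst_nodup K N μ) hq hp]

lemma sgn_ne_zero (K : ℕ) (i : Fin K) (k : Fin K → Bool) : sgn K i k ≠ 0 := by
  unfold sgn
  exact pow_ne_zero _ (by norm_num)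

lemma genOp_eVec (K : ℕ) (i : Fin K) (b : Bool) (k : Fin K → Bool) :
    genOp K i b (eVec K k) =
      if k i = !b then sgn K i k • eVec K (Function.update k i b) else 0 := by
  funext m
  rw [genOp_apply]
  by_cases hk : k i = !b
  · rw [if_pos hk]
    by_cases hm : m = Function.update k i b
    · have hmi : m i = b := by rw [hm, Function.update_self]
      rw [if_pos hmi]
      have h1 : Function.update m i (!b) = k := by
        rw [hm, Function.update_idem, ← hk, Function.update_eq_self]
      have h2 : sgn K i m = sgn K i k := by
        rw [hm, sgn_update_self]
      rw [h1, h2]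
      simp [eVec_apply, hm]
    · have : eVec K (Function.update k i b) m = 0 := by
        rw [eVec_apply, if_neg hm]
      rw [Pi.smul_apply, this, smul_zero]
      split_ifs with hmi
      · have : Function.update m i (!b) ≠ k := by
          intro hc
          apply hm
          rw [← hc, Function.update_idem, ← hmi, Function.update_eq_self]
        rw [eVec_apply, if_neg this, mul_zero]
      · rfl
  · rw [if_neg hk]
    split_ifs with hmi
    · have : Function.update m i (!b) ≠ k := by
        intro hc
        apply hk
        rw [← hc, Function.update_self]
      rw [eVec_apply, if_neg this, mul_zero]
      rfl
    · rfl

def applyList (K : ℕ) (L : List (Fin K × Bool)) (k : Fin K → Bool) : Fin K → Bool :=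
  L.foldr (fun p k' => Function.update k' p.1 p.2) k

lemma applyList_nil (K : ℕ) (k : Fin K → Bool) : applyList K [] k = k := rfl

lemma applyList_cons (K : ℕ) (p : Fin K × Bool) (L : List (Fin K × Bool)) (k : Fin K → Bool) :
    applyList K (p :: L) k = Function.update (applyList K L k) p.1 p.2 := rfl

lemma applyList_of_not_mem (K : ℕ) (L : List (Fin K × Bool)) (k : Fin K → Bool)
    (j : Fin K) (h : j ∉ L.map Prod.fst) : applyList K L k j = k j := by
  induction L with
  | nil => rfl
  | cons p L ih =>
    have hne : j ≠ p.1 := fun hc => h (by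
      rw [hc]; exact List.mem_map_of_mem (List.mem_cons_self))
    rw [applyList_cons, Function.update_of_ne hne]
    exact ih (fun hc => h (List.mem_cons_of_mem _ hc))

lemma applyList_of_mem (K : ℕ) (L : List (Fin K × Bool)) (k : Fin K → Bool)
    (p : Fin K × Bool) (hnd : (L.map Prod.fst).Nodup) (hp : p ∈ L) :
    applyList K L k p.1 = p.2 := by
  induction L with
  | nil => exact absurd hp (List.not_mem_nil)
  | cons q L ih =>
    rw [applyList_cons]
    rcases List.mem_cons.mp hp with rfl | hp'
    · rw [Function.update_self]
    · rw [List.map_cons, List.nodup_cons] at hnd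
      have hne : p.1 ≠ q.1 := by
        intro hc
        exact hnd.1 (hc ▸ List.mem_map_of_mem hp')
      rw [Function.update_of_ne hne]
      exact ih hnd.2 hp'

lemma opList_eVec_of_compat (K : ℕ) (L : List (Fin K × Bool)) (k : Fin K → Bool)
    (hnd : (L.map Prod.fst).Nodup) (hc : ∀ p ∈ L, k p.1 = !p.2) :
    ∃ c : ℝ, c ≠ 0 ∧ opList K L (eVec K k) = c • eVec K (applyList K L k) := by
  induction L with
  | nil => exact ⟨1, one_ne_zero, by simp [opList_nil, applyList_nil]⟩
  | cons p L ih =>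
    rw [List.map_cons, List.nodup_cons] at hnd
    obtain ⟨c, hc0, hL⟩ := ih hnd.2 (fun q hq => hc q (List.mem_cons_of_mem p hq))
    have hval : applyList K L k p.1 = !p.2 := by
      rw [applyList_of_not_mem K L k p.1 hnd.1]
      exact hc p (List.mem_cons_self)
    refine ⟨c * sgn K p.1 (applyList K L k), mul_ne_zero hc0 (sgn_ne_zero _ _ _), ?_⟩
    have key : opList K (p :: L) (eVec K k) = genOp K p.1 p.2 (opList K L (eVec K k)) := by
      rw [opList_cons]; rfl
    rw [key, hL, map_smul, genOp_eVec, if_pos hval, applyList_cons, smul_smul]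

lemma opList_eVec (K : ℕ) (L : List (Fin K × Bool)) (k : Fin K → Bool) :
    opList K L (eVec K k) = 0 ∨
      ∃ c : ℝ, c ≠ 0 ∧ ∃ k', opList K L (eVec K k) = c • eVec K k' := by
  induction L with
  | nil => exact Or.inr ⟨1, one_ne_zero, k, by simp [opList_nil]⟩
  | cons p L ih =>
    have key : opList K (p :: L) (eVec K k) = genOp K p.1 p.2 (opList K L (eVec K k)) := by
      rw [opList_cons]; rfl
    rw [key]
    rcases ih with h0 | ⟨c, hc0, k', hk'⟩
    · left; rw [h0, map_zero]
    · rw [hk', map_smul, genOp_eVec]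
      by_cases hb : k' p.1 = !p.2
      · right
        exact ⟨c * sgn K p.1 k', mul_ne_zero hc0 (sgn_ne_zero _ _ _),
          Function.update k' p.1 p.2, by rw [if_pos hb, smul_smul]⟩
      · left; rw [if_neg hb, smul_zero]

lemma eVec_smul_inj (K : ℕ) (c d : ℝ) (k k' : Fin K → Bool) (hc : c ≠ 0)
    (h : c • eVec K k = d • eVec K k') : k = k' := by
  by_contra hne
  have := congrFun h k
  rw [Pi.smul_apply, Pi.smul_apply, eVec_apply, eVec_apply, if_pos rfl,
    if_neg (fun hc2 => hne hc2)] at this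
  simp at this
  exact hc this

lemma opList_cons_head (K : ℕ) (p : Fin K × Bool) (L : List (Fin K × Bool))
    (k k'' : Fin K → Bool) (c : ℝ) (hc : c ≠ 0)
    (h : opList K (p :: L) (eVec K k) = c • eVec K k'') : k'' p.1 = p.2 := by
  rcases opList_eVec K L k with h0 | ⟨d, hd0, k', hk'⟩
  · rw [opList_cons] at h
    replace h : genOp K p.1 p.2 (opList K L (eVec K k)) = c • eVec K k'' := h
    rw [h0, map_zero] at h
    have := congrFun h.symm k''
    rw [Pi.smul_apply, eVec_apply, if_pos rfl] at this
    simp at this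
    exact absurd this hc
  · rw [opList_cons] at h
    replace h : genOp K p.1 p.2 (opList K L (eVec K k)) = c • eVec K k'' := h
    rw [hk', map_smul, genOp_eVec] at h
    by_cases hb : k' p.1 = !p.2
    · rw [if_pos hb, smul_smul] at h
      have hkk : k'' = Function.update k' p.1 p.2 :=
        eVec_smul_inj K c _ _ _ hc h.symm
      rw [hkk, Function.update_self]
    · rw [if_neg hb, smul_zero] at h
      have := congrFun h.symm k''
      rw [Pi.smul_apply, eVec_apply, if_pos rfl] at this
      simp at this
      exact absurd this hc


-- ### SECTION 6
lemma card_filter_lt (K N : ℕ) (h : N ≤ K) :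
    (Finset.univ.filter fun j : Fin K => (j : ℕ) < N).card = N := by
  have : (Finset.univ.filter fun j : Fin K => (j : ℕ) < N)
      = Finset.map (Fin.castLEEmb h) Finset.univ := by
    ext j
    simp only [Finset.mem_filter, Finset.mem_univ, true_and,
      Finset.mem_map, Fin.castLEEmb_apply]
    constructor
    · intro hj
      exact ⟨⟨(j : ℕ), hj⟩, by ext; simp⟩
    · rintro ⟨i, -, rfl⟩
      simpa using i.isLt
  rw [this]
  simp

lemma exc_surj (K N : ℕ) (hNK : N ≤ K) (k : Fin K → Bool)
    (hk : nTrue K k = N) (hne : k ≠ refOcc K N) :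
    ∃ μ : ExIdx K N, applyList K (excList K N μ) (refOcc K N) = k := by
  classical
  set O := Finset.univ.filter (fun j : Fin K => (j : ℕ) < N ∧ k j = false) with hO
  set V := Finset.univ.filter (fun j : Fin K => N ≤ (j : ℕ) ∧ k j = true) with hV
  -- cardinality bookkeeping
  have hsplitN : (Finset.univ.filter fun j : Fin K => (j : ℕ) < N ∧ k j = true).card
      + O.card = N := by
    rw [hO]
    have := Finset.card_filter_add_card_filter_not
      (s := Finset.univ.filter fun j : Fin K => (j : ℕ) < N)
      (p := fun j => k j = true)
    rw [Finset.filter_filter, Finset.filter_filter, card_filter_lt K N hNK] at this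
    have e1 : Finset.univ.filter (fun a : Fin K => (a : ℕ) < N ∧ ¬ k a = true)
        = Finset.univ.filter (fun j : Fin K => (j : ℕ) < N ∧ k j = false) := by
      ext a; simp [Bool.not_eq_true]
    rw [e1] at this
    exact this
  have hsplitT : (Finset.univ.filter fun j : Fin K => (j : ℕ) < N ∧ k j = true).card
      + V.card = N := by
    rw [hV]
    have := Finset.card_filter_add_card_filter_not
      (s := Finset.univ.filter fun j : Fin K => k j = true)
      (p := fun j => (j : ℕ) < N)
    rw [Finset.filter_filter, Finset.filter_filter] at this
    have hT : (Finset.univ.filter fun j : Fin K => k j = true).card = N := hk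
    rw [hT] at this
    have e1 : Finset.univ.filter (fun a : Fin K => k a = true ∧ ¬ (a : ℕ) < N)
        = Finset.univ.filter (fun j : Fin K => N ≤ (j : ℕ) ∧ k j = true) := by
      ext a; simp [Nat.not_lt, and_comm]
    have e2 : Finset.univ.filter (fun a : Fin K => k a = true ∧ (a : ℕ) < N)
        = Finset.univ.filter (fun j : Fin K => (j : ℕ) < N ∧ k j = true) := by
      ext a; simp [and_comm]
    rw [e1, e2] at this
    exact this
  have hcard : V.card = O.card := by omega
  have hrpos : 1 ≤ O.card := by
    by_contra h0
    push_neg at h0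
    have hOc : O.card = 0 := by omega
    · have hVc : V.card = 0 := by omega
      rw [Finset.card_eq_zero] at hOc hVc
      apply hne
      funext j
      by_cases hj : (j : ℕ) < N
      · have : j ∉ O := by rw [hOc]; exact Finset.notMem_empty j
        rw [hO] at this
        simp only [Finset.mem_filter, Finset.mem_univ, true_and, not_and] at this
        have := this hj
        simp only [refOcc, hj, decide_true]
        cases hkj : k j
        · exact absurd hkj this
        · rfl
      · have : j ∉ V := by rw [hVc]; exact Finset.notMem_empty j
        rw [hV] at this
        simp only [Finset.mem_filter, Finset.mem_univ, true_and, not_and] at this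
        have := this (Nat.le_of_not_lt hj)
        simp only [refOcc, hj, decide_false]
        cases hkj : k j
        · rfl
        · exact absurd hkj this
  have hrle : O.card ≤ N := by
    have hsub : O ⊆ Finset.univ.filter (fun j : Fin K => (j : ℕ) < N) := by
      intro j hj
      rw [hO] at hj
      simp only [Finset.mem_filter, Finset.mem_univ, true_and] at hj ⊢
      exact hj.1
    calc O.card ≤ _ := Finset.card_le_card hsub
      _ = N := card_filter_lt K N hNK
  refine ⟨⟨O.card, hrpos, hrle, O.orderEmbOfFin rfl, V.orderEmbOfFin hcard,
    (O.orderEmbOfFin rfl).strictMono, (V.orderEmbOfFin hcard).strictMono,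
    ?_, ?_⟩, ?_⟩
  · intro j
    have := Finset.orderEmbOfFin_mem O rfl j
    exact (Finset.mem_filter.mp this).2.1
  · intro j
    have := Finset.orderEmbOfFin_mem V hcard j
    exact (Finset.mem_filter.mp this).2.1
  · set μ : ExIdx K N := ⟨O.card, hrpos, hrle, O.orderEmbOfFin rfl, V.orderEmbOfFin hcard,
      (O.orderEmbOfFin rfl).strictMono, (V.orderEmbOfFin hcard).strictMono, _, _⟩
    funext j
    by_cases hjV : j ∈ V
    · obtain ⟨l, hl⟩ : ∃ l, V.orderEmbOfFin hcard l = j := by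
        have : j ∈ Set.range (V.orderEmbOfFin hcard) := by
          rw [Finset.range_orderEmbOfFin]
          exact hjV
        exact this
      have hmem : ((j, true) : Fin K × Bool) ∈ excList K N μ := by
        rw [mem_excList]
        exact Or.inl ⟨l, by rw [← hl]⟩
      have := applyList_of_mem K (excList K N μ) (refOcc K N) (j, true)
        (excList_fst_nodup K N μ) hmem
      rw [this]
      rw [hV] at hjV
      simp only [Finset.mem_filter, Finset.mem_univ, true_and] at hjV
      exact hjV.2.symm
    · by_cases hjO : j ∈ O
      · obtain ⟨l, hl⟩ : ∃ l, O.orderEmbOfFin rfl l = j := by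
          have : j ∈ Set.range (O.orderEmbOfFin rfl) := by
            rw [Finset.range_orderEmbOfFin]
            exact hjO
          exact this
        have hmem : ((j, false) : Fin K × Bool) ∈ excList K N μ := by
          rw [mem_excList]
          exact Or.inr ⟨l, by rw [← hl]⟩
        have := applyList_of_mem K (excList K N μ) (refOcc K N) (j, false)
          (excList_fst_nodup K N μ) hmem
        rw [this]
        rw [hO] at hjO
        simp only [Finset.mem_filter, Finset.mem_univ, true_and] at hjO
        exact hjO.2.symm
      · have hnm : j ∉ (excList K N μ).map Prod.fst := by
          intro hmem
          obtain ⟨p, hp, hpj⟩ := List.mem_map.mp hmem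
          rcases (mem_excList K N μ p).mp hp with ⟨l, rfl⟩ | ⟨l, rfl⟩
          · apply hjV
            rw [← hpj]
            exact Finset.orderEmbOfFin_mem V hcard l
          · apply hjO
            rw [← hpj]
            exact Finset.orderEmbOfFin_mem O rfl l
        rw [applyList_of_not_mem K _ _ j hnm]
        rw [hO] at hjO
        rw [hV] at hjV
        simp only [Finset.mem_filter, Finset.mem_univ, true_and, not_and] at hjO hjV
        by_cases hj : (j : ℕ) < N
        · have := hjO hj
          simp only [refOcc, hj, decide_true]
          cases hkj : k j
          · exact absurd hkj this
          · rfl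
        · have := hjV (Nat.le_of_not_lt hj)
          simp only [refOcc, hj, decide_false]
          cases hkj : k j
          · rfl
          · exact absurd hkj this

-- ### SECTION 6b : reference-state computations
lemma excList_compat (K N : ℕ) (μ : ExIdx K N) :
    ∀ p ∈ excList K N μ, refOcc K N p.1 = !p.2 := by
  intro p hp
  rcases (mem_excList K N μ p).mp hp with ⟨j, rfl⟩ | ⟨j, rfl⟩
  · simp [refOcc, Nat.not_lt.mpr (μ.vir_ge j)]
  · simp [refOcc, μ.occ_lt j]

lemma excOp_refVec (K N : ℕ) (μ : ExIdx K N) :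
    ∃ c : ℝ, c ≠ 0 ∧ excOp K N μ (refVec K N)
      = c • eVec K (applyList K (excList K N μ) (refOcc K N)) := by
  rw [excOp_eq_opList]
  exact opList_eVec_of_compat K _ _ (excList_fst_nodup K N μ) (excList_compat K N μ)

lemma opList_eVec_mem_val (K : ℕ) (L : List (Fin K × Bool)) (hnd : (L.map Prod.fst).Nodup)
    (k k'' : Fin K → Bool) (c : ℝ) (hc : c ≠ 0)
    (h : opList K L (eVec K k) = c • eVec K k'') : ∀ p ∈ L, k'' p.1 = p.2 := by
  induction L generalizing c k'' with
  | nil => intro p hp; exact absurd hp (List.not_mem_nil)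
  | cons q L ih =>
    rw [List.map_cons, List.nodup_cons] at hnd
    have key : opList K (q :: L) (eVec K k) = genOp K q.1 q.2 (opList K L (eVec K k)) := by
      rw [opList_cons]; rfl
    rw [key] at h
    rcases opList_eVec K L k with h0 | ⟨d, hd0, k', hk'⟩
    · rw [h0, map_zero] at h
      have := congrFun h.symm k''
      rw [Pi.smul_apply, eVec_apply, if_pos rfl] at this
      simp at this
      exact absurd this hc
    · rw [hk', map_smul, genOp_eVec] at h
      by_cases hb : k' q.1 = !q.2
      · rw [if_pos hb, smul_smul] at h
        have hkk : k'' = Function.update k' q.1 q.2 := eVec_smul_inj K c _ _ _ hc h.symm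
        intro p hp
        rcases List.mem_cons.mp hp with rfl | hp'
        · rw [hkk, Function.update_self]
        · have hne : p.1 ≠ q.1 := fun hc2 => hnd.1 (hc2 ▸ List.mem_map_of_mem hp')
          rw [hkk, Function.update_of_ne hne]
          exact ih hnd.2 k' d hd0 hk' p hp'
      · rw [if_neg hb, smul_zero] at h
        have := congrFun h.symm k''
        rw [Pi.smul_apply, eVec_apply, if_pos rfl] at this
        simp at this
        exact absurd this hc

lemma Hspace_coord (K N : ℕ) (f : FockSpace K) (hf : f ∈ Hspace K N)
    (k : Fin K → Bool) (hk : nTrue K k ≠ N) : f k = 0 := by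
  refine Submodule.span_induction ?_ ?_ ?_ ?_ hf
  · rintro x ⟨k', hk', rfl⟩
    rw [eVec_apply]
    split_ifs with h
    · exact absurd (h ▸ hk') hk
    · rfl
  · rfl
  · intro x y _ _ hx hy
    show x k + y k = 0
    rw [hx, hy, add_zero]
  · intro c x _ hx
    show c * x k = 0
    rw [hx, mul_zero]

lemma eVec_mem_Hspace (K N : ℕ) (k : Fin K → Bool) (hk : nTrue K k = N) :
    eVec K k ∈ Hspace K N :=
  Submodule.subset_span ⟨k, hk, rfl⟩

lemma smul_eVec_nTrue (K N : ℕ) (c : ℝ) (hc : c ≠ 0) (k : Fin K → Bool)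
    (h : c • eVec K k ∈ Hspace K N) : nTrue K k = N := by
  by_contra hne
  have := Hspace_coord K N _ h k hne
  rw [Pi.smul_apply, eVec_apply, if_pos rfl] at this
  simp at this
  exact hc this

lemma excOp_eVec_spec (K N : ℕ) (hX : ExcInvariant K N) (μ : ExIdx K N)
    (k : Fin K → Bool) (hk : nTrue K k = N) :
    excOp K N μ (eVec K k) = 0 ∨
      ∃ c : ℝ, c ≠ 0 ∧ ∃ k', nTrue K k' = N ∧ k' ≠ refOcc K N ∧
        excOp K N μ (eVec K k) = c • eVec K k' := by
  rw [excOp_eq_opList]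
  rcases opList_eVec K (excList K N μ) k with h0 | ⟨c, hc0, k', h⟩
  · exact Or.inl h0
  · right
    refine ⟨c, hc0, k', ?_, ?_, h⟩
    · apply smul_eVec_nTrue K N c hc0 k'
      rw [← h, ← excOp_eq_opList]
      exact hX μ _ (eVec_mem_Hspace K N k hk)
    · have hv : k' (μ.vir ⟨0, μ.r_pos⟩) = true := by
        have hmem : ((μ.vir ⟨0, μ.r_pos⟩, true) : Fin K × Bool) ∈ excList K N μ :=
          (mem_excList K N μ _).mpr (Or.inl ⟨⟨0, μ.r_pos⟩, rfl⟩)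
        exact opList_eVec_mem_val K _ (excList_fst_nodup K N μ) k k' c hc0 h _ hmem
      intro hc2
      rw [hc2] at hv
      simp only [refOcc, decide_eq_true_eq] at hv
      exact absurd hv (Nat.not_lt.mpr (μ.vir_ge ⟨0, μ.r_pos⟩))

-- ### SECTION 7 : spanning
lemma excResL_val (K N : ℕ) (hX : ExcInvariant K N) (μ : ExIdx K N) (x : Hspace K N) :
    (excResL K N hX μ x : FockSpace K) = excOp K N μ (x : FockSpace K) := rfl

lemma span_ref_exc (K N : ℕ) (hNK : N ≤ K) (hX : ExcInvariant K N) :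
    (⊤ : Submodule ℝ (Hspace K N)) ≤ Submodule.span ℝ
      ({refState K N hNK} ∪
        Set.range (fun μ : ExIdx K N => excResL K N hX μ (refState K N hNK))) := by
  intro x _
  set T : Set (Hspace K N) := {refState K N hNK} ∪
    Set.range (fun μ : ExIdx K N => excResL K N hX μ (refState K N hNK)) with hT
  have hx : (x : FockSpace K) ∈ Hspace K N := x.2
  have main : ∀ v : FockSpace K, v ∈ Hspace K N →
      ∃ y, y ∈ Submodule.span ℝ T ∧ (y : FockSpace K) = v := by
    intro v hv
    refine Submodule.span_induction ?_ ?_ ?_ ?_ hv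
    · rintro w ⟨k, hk, rfl⟩
      by_cases hne : k = refOcc K N
      · refine ⟨refState K N hNK, Submodule.subset_span (Or.inl rfl), ?_⟩
        rw [hne]; rfl
      · obtain ⟨μ, hμ⟩ := exc_surj K N hNK k hk hne
        obtain ⟨c, hc0, hc⟩ := excOp_refVec K N μ
        rw [hμ] at hc
        refine ⟨c⁻¹ • excResL K N hX μ (refState K N hNK), ?_, ?_⟩
        · exact Submodule.smul_mem _ _ (Submodule.subset_span (Or.inr ⟨μ, rfl⟩))
        · show c⁻¹ • (excResL K N hX μ (refState K N hNK) : FockSpace K) = eVec K k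
          rw [excResL_val]
          show c⁻¹ • excOp K N μ (refVec K N) = eVec K k
          rw [hc, smul_smul, inv_mul_cancel₀ hc0, one_smul]
    · exact ⟨0, Submodule.zero_mem _, rfl⟩
    · rintro a b _ _ ⟨ya, hya, hva⟩ ⟨yb, hyb, hvb⟩
      exact ⟨ya + yb, Submodule.add_mem _ hya hyb, by
        rw [Submodule.coe_add, hva, hvb]⟩
    · rintro c a _ ⟨ya, hya, hva⟩
      exact ⟨c • ya, Submodule.smul_mem _ _ hya, by
        rw [Submodule.coe_smul, hva]⟩
  obtain ⟨y, hy, hyv⟩ := main _ hx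
  have : y = x := Subtype.ext hyv
  rwa [this] at hy

-- ### SECTION 8 : closure under multiplication
instance (K N : ℕ) : LeftDistribClass (Hspace K N →L[ℝ] Hspace K N) :=
  ⟨fun a b c => ContinuousLinearMap.ext fun x => by
    simp [ContinuousLinearMap.mul_apply]⟩
instance (K N : ℕ) : RightDistribClass (Hspace K N →L[ℝ] Hspace K N) :=
  ⟨fun a b c => ContinuousLinearMap.ext fun x => by
    simp [ContinuousLinearMap.mul_apply]⟩
instance (K N : ℕ) :
    SMulCommClass ℝ (Hspace K N →L[ℝ] Hspace K N) (Hspace K N →L[ℝ] Hspace K N) :=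
  ⟨fun r x y => ContinuousLinearMap.ext fun v => by
    simp [smul_eq_mul, ContinuousLinearMap.mul_apply]⟩
instance (K N : ℕ) :
    IsScalarTower ℝ (Hspace K N →L[ℝ] Hspace K N) (Hspace K N →L[ℝ] Hspace K N) :=
  ⟨fun r x y => ContinuousLinearMap.ext fun v => by
    simp [smul_eq_mul, ContinuousLinearMap.mul_apply]⟩

lemma excResL_comm (K N : ℕ) (hX : ExcInvariant K N) (μ ν : ExIdx K N) :
    excResL K N hX μ * excResL K N hX ν = excResL K N hX ν * excResL K N hX μ := by
  refine ContinuousLinearMap.ext fun x => Subtype.ext ?_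
  show excOp K N μ (excOp K N ν (x : FockSpace K)) = excOp K N ν (excOp K N μ (x : FockSpace K))
  have h := excOp_comm K N μ ν
  calc excOp K N μ (excOp K N ν (x : FockSpace K))
      = (excOp K N μ * excOp K N ν) (x : FockSpace K) := rfl
    _ = (excOp K N ν * excOp K N μ) (x : FockSpace K) := by rw [h]
    _ = excOp K N ν (excOp K N μ (x : FockSpace K)) := rfl

lemma cluster_comm (K N : ℕ) (hX : ExcInvariant K N) (μ : ExIdx K N)
    (S : Hspace K N →L[ℝ] Hspace K N) (hS : S ∈ clusterSpace K N hX) :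
    excResL K N hX μ * S = S * excResL K N hX μ := by
  refine Submodule.span_induction ?_ ?_ ?_ ?_ hS
  · rintro s ⟨ν, rfl⟩
    exact excResL_comm K N hX μ ν
  · simp
  · intro a b _ _ ha hb
    rw [mul_add, add_mul, ha, hb]
  · intro c a _ ha
    rw [mul_smul_comm, smul_mul_assoc, ha]

lemma cluster_mul_gen (K N : ℕ) (hNK : N ≤ K) (hX : ExcInvariant K N) (μ ν : ExIdx K N) :
    excResL K N hX μ * excResL K N hX ν ∈ clusterSpace K N hX := by
  classical
  set Φ := refState K N hNK with hΦ
  set G := excResL K N hX μ * excResL K N hX ν with hG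
  have hGΦ : ∀ y : Hspace K N, G y = excResL K N hX μ (excResL K N hX ν y) := fun y => rfl
  -- step 1 : find S ∈ clusterSpace with S Φ = G Φ
  have step1 : ∃ S ∈ clusterSpace K N hX, S Φ = G Φ := by
    obtain ⟨c, hc0, hc⟩ := excOp_refVec K N ν
    set k1 := applyList K (excList K N ν) (refOcc K N) with hk1
    have hk1N : nTrue K k1 = N := by
      apply smul_eVec_nTrue K N c hc0 k1
      rw [← hc]
      exact hX ν _ (refVec_mem K N hNK)
    have hGΦval : (G Φ : FockSpace K) = c • excOp K N μ (eVec K k1) := by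
      rw [hGΦ]
      rw [excResL_val]
      have : (excResL K N hX ν Φ : FockSpace K) = c • eVec K k1 := by
        rw [excResL_val]
        exact hc
      rw [this, map_smul]
    rcases excOp_eVec_spec K N hX μ k1 hk1N with h0 | ⟨c2, hc20, k2, hk2N, hk2ne, h2⟩
    · refine ⟨0, Submodule.zero_mem _, ?_⟩
      apply Subtype.ext
      show ((0 : Hspace K N) : FockSpace K) = (G Φ : FockSpace K)
      rw [hGΦval, h0, smul_zero]
      rfl
    · obtain ⟨ρ, hρ⟩ := exc_surj K N hNK k2 hk2N hk2ne
      obtain ⟨c3, hc30, hc3⟩ := excOp_refVec K N ρ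
      rw [hρ] at hc3
      refine ⟨(c * c2 / c3) • excResL K N hX ρ, Submodule.smul_mem _ _
        (Submodule.subset_span ⟨ρ, rfl⟩), ?_⟩
      apply Subtype.ext
      show (c * c2 / c3) • (excResL K N hX ρ Φ : FockSpace K) = (G Φ : FockSpace K)
      rw [excResL_val]
      show (c * c2 / c3) • excOp K N ρ (refVec K N) = _
      rw [hc3, hGΦval, h2, smul_smul, smul_smul]
      congr 1
      field_simp
  obtain ⟨S, hS, hSΦ⟩ := step1
  have hGcomm : ∀ σ, excResL K N hX σ * G = G * excResL K N hX σ := by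
    intro σ
    rw [hG]
    calc excResL K N hX σ * (excResL K N hX μ * excResL K N hX ν)
        = (excResL K N hX σ * excResL K N hX μ) * excResL K N hX ν := by rw [mul_assoc]
      _ = (excResL K N hX μ * excResL K N hX σ) * excResL K N hX ν := by
          rw [excResL_comm K N hX σ μ]
      _ = excResL K N hX μ * (excResL K N hX σ * excResL K N hX ν) := by rw [mul_assoc]
      _ = excResL K N hX μ * (excResL K N hX ν * excResL K N hX σ) := by
          rw [excResL_comm K N hX σ ν]
      _ = (excResL K N hX μ * excResL K N hX ν) * excResL K N hX σ := by rw [mul_assoc]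
  have key : ∀ x : Hspace K N, G x = S x := by
    intro x
    have hx : x ∈ Submodule.span ℝ ({refState K N hNK} ∪
        Set.range (fun σ : ExIdx K N => excResL K N hX σ (refState K N hNK))) :=
      span_ref_exc K N hNK hX Submodule.mem_top
    refine Submodule.span_induction ?_ ?_ ?_ ?_ hx
    · rintro y (h | ⟨σ, rfl⟩)
      · rw [Set.mem_singleton_iff] at h
        subst h
        exact hSΦ.symm
      · show G (excResL K N hX σ Φ) = S (excResL K N hX σ Φ)
        calc G (excResL K N hX σ Φ) = (G * excResL K N hX σ) Φ := rfl
          _ = (excResL K N hX σ * G) Φ := by rw [hGcomm σ]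
          _ = excResL K N hX σ (G Φ) := rfl
          _ = excResL K N hX σ (S Φ) := by rw [hSΦ]
          _ = (excResL K N hX σ * S) Φ := rfl
          _ = (S * excResL K N hX σ) Φ := by rw [cluster_comm K N hX σ S hS]
          _ = S (excResL K N hX σ Φ) := rfl
    · simp
    · intro a b _ _ ha hb
      rw [map_add, map_add, ha, hb]
    · intro r a _ ha
      rw [map_smul, map_smul, ha]
  have : G = S := ContinuousLinearMap.ext key
  rw [this]
  exact hS

lemma cluster_mul (K N : ℕ) (hNK : N ≤ K) (hX : ExcInvariant K N)
    {a b : Hspace K N →L[ℝ] Hspace K N} (ha : a ∈ clusterSpace K N hX)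
    (hb : b ∈ clusterSpace K N hX) : a * b ∈ clusterSpace K N hX := by
  induction ha using Submodule.span_induction with
  | mem x hx =>
    obtain ⟨μ, rfl⟩ := hx
    induction hb using Submodule.span_induction with
    | mem y hy =>
      obtain ⟨ν, rfl⟩ := hy
      exact cluster_mul_gen K N hNK hX μ ν
    | zero => rw [mul_zero]; exact Submodule.zero_mem _
    | add y z _ _ hy hz => rw [mul_add]; exact Submodule.add_mem _ hy hz
    | smul r y _ hy => rw [mul_smul_comm]; exact Submodule.smul_mem _ _ hy
  | zero => rw [zero_mul]; exact Submodule.zero_mem _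
  | add x y _ _ hx hy => rw [add_mul]; exact Submodule.add_mem _ hx hy
  | smul r x _ hx => rw [smul_mul_assoc]; exact Submodule.smul_mem _ _ hx

lemma cluster_pow (K N : ℕ) (hNK : N ≤ K) (hX : ExcInvariant K N)
    {a : Hspace K N →L[ℝ] Hspace K N} (ha : a ∈ clusterSpace K N hX) (n : ℕ) :
    a ^ (n + 1) ∈ clusterSpace K N hX := by
  induction n with
  | zero => rw [pow_one]; exact ha
  | succ n ih =>
    rw [pow_succ]
    exact cluster_mul K N hNK hX ih ha



-- ### SECTION 9 : nilpotency
def wOcc (K N : ℕ) (k : Fin K → Bool) : ℕ :=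
  (Finset.univ.filter fun j : Fin K => (j : ℕ) < N ∧ k j = true).card

lemma wOcc_le (K N : ℕ) (hNK : N ≤ K) (k : Fin K → Bool) : wOcc K N k ≤ N := by
  unfold wOcc
  calc _ ≤ (Finset.univ.filter fun j : Fin K => (j : ℕ) < N).card :=
        Finset.card_le_card (fun a ha => by
          simp only [Finset.mem_filter] at ha ⊢
          exact ⟨ha.1, ha.2.1⟩)
    _ = N := card_filter_lt K N hNK

lemma wOcc_update_ge (K N : ℕ) (i : Fin K) (hi : N ≤ (i : ℕ)) (k : Fin K → Bool) (b : Bool) :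
    wOcc K N (Function.update k i b) = wOcc K N k := by
  unfold wOcc
  congr 1
  ext a
  simp only [Finset.mem_filter, Finset.mem_univ, true_and]
  by_cases ha : a = i
  · subst ha
    constructor
    · rintro ⟨h1, _⟩; omega
    · rintro ⟨h1, _⟩; omega
  · rw [Function.update_of_ne ha]

lemma wOcc_update_true_ge (K N : ℕ) (i : Fin K) (k : Fin K → Bool) :
    wOcc K N k ≤ wOcc K N (Function.update k i true) := by
  unfold wOcc
  apply Finset.card_le_card
  intro a ha
  simp only [Finset.mem_filter, Finset.mem_univ, true_and] at ha ⊢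
  refine ⟨ha.1, ?_⟩
  by_cases h : a = i
  · subst h; rw [Function.update_self]
  · rw [Function.update_of_ne h]; exact ha.2

lemma wOcc_update_true (K N : ℕ) (i : Fin K) (hi : (i : ℕ) < N) (k : Fin K → Bool)
    (hk : k i = false) : wOcc K N (Function.update k i true) = wOcc K N k + 1 := by
  unfold wOcc
  have : (Finset.univ.filter fun j : Fin K => (j : ℕ) < N ∧ Function.update k i true j = true)
      = insert i (Finset.univ.filter fun j : Fin K => (j : ℕ) < N ∧ k j = true) := by
    ext a
    simp only [Finset.mem_filter, Finset.mem_univ, true_and, Finset.mem_insert]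
    by_cases h : a = i
    · subst h; simp [hi]
    · rw [Function.update_of_ne h]; simp [h]
  rw [this, Finset.card_insert_of_notMem (by simp [hk])]

def Vanish (K N : ℕ) (s : ℕ) (f : FockSpace K) : Prop :=
  ∀ k, s ≤ wOcc K N k → f k = 0

lemma vanish_genOp_pres (K N : ℕ) (i : Fin K) (b : Bool)
    (hgood : (b = true → N ≤ (i : ℕ)) ∧ (b = false → (i : ℕ) < N))
    (s : ℕ) (f : FockSpace K) (hf : Vanish K N s f) : Vanish K N s (genOp K i b f) := by
  intro k hk
  rw [genOp_apply]
  split_ifs with h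
  · cases b with
    | true =>
      rw [hf _ (by rw [wOcc_update_ge K N i (hgood.1 rfl) k]; exact hk), mul_zero]
    | false =>
      rw [hf _ (le_trans hk (by simpa using wOcc_update_true_ge K N i k)), mul_zero]
  · rfl

lemma vanish_genOp_drop (K N : ℕ) (i : Fin K) (hi : (i : ℕ) < N)
    (s : ℕ) (f : FockSpace K) (hf : Vanish K N (s + 1) f) :
    Vanish K N s (genOp K i false f) := by
  intro k hk
  rw [genOp_apply]
  split_ifs with h
  · have : wOcc K N (Function.update k i (!false)) = wOcc K N k + 1 := by
      simpa using wOcc_update_true K N i hi k h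
    rw [hf _ (by omega), mul_zero]
  · rfl

lemma vanish_opList_pres (K N : ℕ) (L : List (Fin K × Bool))
    (hgood : ∀ p ∈ L, (p.2 = true → N ≤ (p.1 : ℕ)) ∧ (p.2 = false → (p.1 : ℕ) < N))
    (s : ℕ) (f : FockSpace K) (hf : Vanish K N s f) : Vanish K N s (opList K L f) := by
  induction L with
  | nil => exact hf
  | cons p L ih =>
    have key : opList K (p :: L) f = genOp K p.1 p.2 (opList K L f) := by
      rw [opList_cons]; rfl
    rw [key]
    exact vanish_genOp_pres K N p.1 p.2 (hgood p (List.mem_cons_self)) s _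
      (ih (fun q hq => hgood q (List.mem_cons_of_mem p hq)))

lemma vanish_opList_drop (K N : ℕ) (L : List (Fin K × Bool))
    (hgood : ∀ p ∈ L, (p.2 = true → N ≤ (p.1 : ℕ)) ∧ (p.2 = false → (p.1 : ℕ) < N))
    (hann : ∃ p ∈ L, p.2 = false)
    (s : ℕ) (f : FockSpace K) (hf : Vanish K N (s + 1) f) : Vanish K N s (opList K L f) := by
  induction L with
  | nil => obtain ⟨p, hp, -⟩ := hann; exact absurd hp (List.not_mem_nil)
  | cons p L ih =>
    have key : opList K (p :: L) f = genOp K p.1 p.2 (opList K L f) := by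
      rw [opList_cons]; rfl
    rw [key]
    by_cases hL : ∃ q ∈ L, q.2 = false
    · exact vanish_genOp_pres K N p.1 p.2 (hgood p (List.mem_cons_self)) s _
        (ih (fun q hq => hgood q (List.mem_cons_of_mem p hq)) hL)
    · obtain ⟨q, hq, hq2⟩ := hann
      have hpq : q = p := by
        rcases List.mem_cons.mp hq with rfl | hq'
        · rfl
        · exact absurd ⟨q, hq', hq2⟩ hL
      subst hpq
      have hfL : Vanish K N (s + 1) (opList K L f) :=
        vanish_opList_pres K N L (fun r hr => hgood r (List.mem_cons_of_mem q hr)) (s + 1) f hf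
      have := vanish_genOp_drop K N q.1 ((hgood q (List.mem_cons_self)).2 hq2) s _ hfL
      rwa [← hq2] at this

lemma vanish_excOp (K N : ℕ) (μ : ExIdx K N) (s : ℕ) (f : FockSpace K)
    (hf : Vanish K N (s + 1) f) : Vanish K N s (excOp K N μ f) := by
  rw [excOp_eq_opList]
  apply vanish_opList_drop K N _ ?_ ?_ s f hf
  · intro p hp
    rcases (mem_excList K N μ p).mp hp with ⟨j, rfl⟩ | ⟨j, rfl⟩
    · exact ⟨fun _ => μ.vir_ge j, fun h => by simp at h⟩
    · exact ⟨fun h => by simp at h, fun _ => μ.occ_lt j⟩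
  · exact ⟨(μ.occ ⟨0, μ.r_pos⟩, false),
      (mem_excList K N μ _).mpr (Or.inr ⟨⟨0, μ.r_pos⟩, rfl⟩), rfl⟩

open Polynomial in
lemma exp_sum_of_nilpotent {A : Type} [NormedRing A] [NormedAlgebra ℝ A] [CompleteSpace A]
    (x : A) (M : ℕ) (h : x ^ M = 0) :
    NormedSpace.exp x = ∑ n ∈ Finset.range M, ((n.factorial : ℝ))⁻¹ • x ^ n := by
  rw [NormedSpace.exp_eq_tsum ℝ]
  refine tsum_eq_sum fun n hn => ?_
  have hM : M ≤ n := by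
    by_contra hc
    exact hn (Finset.mem_range.mpr (Nat.lt_of_not_le hc))
  have hx : x ^ n = 0 := by
    have e : x ^ n = x ^ M * x ^ (n - M) := by
      rw [← pow_add]
      congr 1
      omega
    rw [e, h, zero_mul]
  rw [hx, smul_zero]

open Polynomial in
lemma exp_poly {A : Type} [NormedRing A] [NormedAlgebra ℝ A] [CompleteSpace A]
    (C : A) (M : ℕ) (hM : C ^ M = 0) :
    ∀ k : ℕ, ∃ p q : Polynomial ℝ, p.coeff 0 = 0 ∧
      NormedSpace.exp (aeval C p) = 1 + C + C ^ (k + 1) * aeval C q := by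
  have hcom : ∀ a b : Polynomial ℝ, Commute (aeval C a) (aeval C b) := by
    intro a b
    show aeval C a * aeval C b = aeval C b * aeval C a
    rw [← map_mul, ← map_mul, mul_comm]
  intro k
  induction k with
  | zero =>
    refine ⟨0, -1, by simp, ?_⟩
    rw [map_zero, NormedSpace.exp_zero, map_neg, map_one, pow_one, mul_neg_one]
    rw [add_assoc, add_neg_cancel, add_zero]
  | succ k ih =>
    obtain ⟨p, q, hp0, hexp⟩ := ih
    set Q := aeval C q with hQ
    set δ : Polynomial ℝ := -(X ^ (k + 1) * q) with hδ
    set Δ := aeval C δ with hΔdef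
    have hXdvd : (X : Polynomial ℝ) ∣ δ := ⟨-(X ^ k * q), by rw [hδ]; ring⟩
    obtain ⟨ρ₀, hρ₀⟩ := pow_dvd_pow_of_dvd hXdvd M
    have hΔM : Δ ^ M = 0 := by
      rw [hΔdef, ← map_pow, hρ₀, map_mul, map_pow, Polynomial.aeval_X, hM, zero_mul]
    have hΔM2 : Δ ^ (M + 2) = 0 := by rw [pow_add, hΔM, zero_mul]
    set ρ : Polynomial ℝ := ∑ n ∈ Finset.range M, (((n + 2).factorial : ℝ))⁻¹ • δ ^ n with hρ
    have haρ : aeval C ρ = ∑ n ∈ Finset.range M, (((n + 2).factorial : ℝ))⁻¹ • Δ ^ n := by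
      rw [hρ, map_sum]
      refine Finset.sum_congr rfl fun n _ => ?_
      rw [map_smul, map_pow]
    have hexpΔ : NormedSpace.exp Δ = aeval C (1 + δ + δ ^ 2 * ρ) := by
      rw [exp_sum_of_nilpotent Δ (M + 2) hΔM2]
      rw [Finset.sum_range_succ' _ (M + 1), Finset.sum_range_succ' _ M]
      have h0 : (((0 : ℕ).factorial : ℝ))⁻¹ • Δ ^ 0 = 1 := by norm_num
      have h1 : ((((0 : ℕ) + 1).factorial : ℝ))⁻¹ • Δ ^ (0 + 1) = Δ := by norm_num
      rw [h0, h1]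
      rw [map_add, map_add, map_one, map_mul, map_pow]
      rw [← hΔdef, haρ]
      rw [Finset.mul_sum]
      have hterm : ∀ n ∈ Finset.range M,
          (((n + 1 + 1).factorial : ℝ))⁻¹ • Δ ^ (n + 1 + 1) = Δ ^ 2 * ((((n + 2).factorial : ℝ))⁻¹ • Δ ^ n) := by
        intro n _
        rw [mul_smul_comm, ← pow_add]
        congr 2
        omega
      rw [Finset.sum_congr rfl hterm]
      abel
    have hpoly : (1 + X + X ^ (k + 1) * q) * (1 + δ + δ ^ 2 * ρ)
        = 1 + X + X ^ (k + 2) *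
            (-q - X ^ k * q ^ 2 + X ^ k * q ^ 2 * ρ * (1 + X + X ^ (k + 1) * q)) := by
      rw [hδ]
      ring
    refine ⟨p + δ, -q - X ^ k * q ^ 2 + X ^ k * q ^ 2 * ρ * (1 + X + X ^ (k + 1) * q), ?_, ?_⟩
    · rw [Polynomial.coeff_add, hp0, zero_add, hδ, Polynomial.coeff_neg,
        Polynomial.mul_coeff_zero, Polynomial.coeff_X_pow]
      simp
    · rw [map_add, NormedSpace.exp_add_of_commute_of_mem_ball (𝕂 := ℝ) (hcom p δ)
        ((NormedSpace.expSeries_radius_eq_top ℝ A).symm ▸ edist_lt_top _ _)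
        ((NormedSpace.expSeries_radius_eq_top ℝ A).symm ▸ edist_lt_top _ _), hexp, hexpΔ]
      have e1 : 1 + C + C ^ (k + 1) * Q = aeval C (1 + X + X ^ (k + 1) * q) := by
        rw [map_add, map_add, map_one, Polynomial.aeval_X, map_mul, map_pow, Polynomial.aeval_X]
      rw [e1, ← map_mul, hpoly, map_add, map_add, map_one, Polynomial.aeval_X,
        map_mul, map_pow, Polynomial.aeval_X]


-- ### SECTION 11 : glue
lemma cluster_drop (K N : ℕ) (hX : ExcInvariant K N) (T : Hspace K N →L[ℝ] Hspace K N)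
    (hT : T ∈ clusterSpace K N hX) :
    ∀ (s : ℕ) (x : Hspace K N), Vanish K N (s + 1) (x : FockSpace K) →
      Vanish K N s ((T x : Hspace K N) : FockSpace K) := by
  refine Submodule.span_induction ?_ ?_ ?_ ?_ hT
  · rintro S ⟨μ, rfl⟩ s x hx
    have e : ((excResL K N hX μ x : Hspace K N) : FockSpace K)
        = excOp K N μ (x : FockSpace K) := rfl
    rw [e]
    exact vanish_excOp K N μ s _ hx
  · intro s x hx k hk
    simp
  · intro a b _ _ ha hb s x hx k hk
    rw [ContinuousLinearMap.add_apply, Submodule.coe_add, Pi.add_apply,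
      ha s x hx k hk, hb s x hx k hk, add_zero]
  · intro c a _ ha s x hx k hk
    rw [ContinuousLinearMap.smul_apply, Submodule.coe_smul, Pi.smul_apply,
      ha s x hx k hk, smul_zero]

lemma cluster_pow_zero (K N : ℕ) (hNK : N ≤ K) (hX : ExcInvariant K N)
    (T : Hspace K N →L[ℝ] Hspace K N) (hT : T ∈ clusterSpace K N hX) :
    T ^ (N + 1) = 0 := by
  refine ContinuousLinearMap.ext fun x => ?_
  have main : ∀ n, n ≤ N + 1 →
      Vanish K N (N + 1 - n) (((T ^ n) x : Hspace K N) : FockSpace K) := by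
    intro n
    induction n with
    | zero =>
      intro _ k hk
      exact absurd hk (by have := wOcc_le K N hNK k; simp; omega)
    | succ n ih =>
      intro hn
      have h1 := ih (by omega)
      have e : (T ^ (n + 1)) x = T ((T ^ n) x) := by rw [pow_succ']; rfl
      rw [e]
      have harith : N + 1 - n = (N + 1 - (n + 1)) + 1 := by omega
      rw [harith] at h1
      exact cluster_drop K N hX T hT _ _ h1
  have h0 := main (N + 1) le_rfl
  rw [Nat.sub_self] at h0
  rw [ContinuousLinearMap.zero_apply]
  apply Subtype.ext
  funext k
  exact h0 k (Nat.zero_le _)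

lemma aeval_mem_cluster (K N : ℕ) (hNK : N ≤ K) (hX : ExcInvariant K N)
    (C : Hspace K N →L[ℝ] Hspace K N) (hC : C ∈ clusterSpace K N hX)
    (p : Polynomial ℝ) (hp : p.coeff 0 = 0) :
    Polynomial.aeval C p ∈ clusterSpace K N hX := by
  rw [Polynomial.aeval_eq_sum_range]
  apply Submodule.sum_mem
  intro n _
  match n with
  | 0 =>
    rw [hp, zero_smul]
    exact Submodule.zero_mem _
  | (m + 1) =>
    exact Submodule.smul_mem _ _ (cluster_pow K N hNK hX hC m)

lemma exp_cluster_eq_one_add (K N : ℕ) (hNK : N ≤ K) (hX : ExcInvariant K N)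
    (T : Hspace K N →L[ℝ] Hspace K N) (hT : T ∈ clusterSpace K N hX) :
    ∃ C ∈ clusterSpace K N hX, NormedSpace.exp T = 1 + C := by
  have hTn : T ^ (N + 1) = 0 := cluster_pow_zero K N hNK hX T hT
  refine ⟨∑ n ∈ Finset.range N, (((n + 1).factorial : ℝ))⁻¹ • T ^ (n + 1), ?_, ?_⟩
  · exact Submodule.sum_mem _ (fun n _ => Submodule.smul_mem _ _ (cluster_pow K N hNK hX hT n))
  · rw [exp_sum_of_nilpotent T (N + 1) hTn, Finset.sum_range_succ' _ N]
    have h0 : (((0 : ℕ).factorial : ℝ))⁻¹ • T ^ 0 = 1 := by norm_num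
    rw [h0]
    exact add_comm (G := Hspace K N →L[ℝ] Hspace K N) _ _

lemma one_add_cluster_eq_exp (K N : ℕ) (hNK : N ≤ K) (hX : ExcInvariant K N)
    (C : Hspace K N →L[ℝ] Hspace K N) (hC : C ∈ clusterSpace K N hX) :
    ∃ T ∈ clusterSpace K N hX, NormedSpace.exp T = 1 + C := by
  have hCn : C ^ (N + 1) = 0 := cluster_pow_zero K N hNK hX C hC
  obtain ⟨p, q, hp0, hexp⟩ := exp_poly C (N + 1) hCn N
  refine ⟨Polynomial.aeval C p, aeval_mem_cluster K N hNK hX C hC p hp0, ?_⟩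
  rw [hexp, hCn, zero_mul]
  exact add_zero (M := Hspace K N →L[ℝ] Hspace K N) _

/-- the exponential image of the cluster algebra coincides with the affine
wave-operator set {id + C : C ∈ 𝔟}. -/
theorem exp_image_eq_wave_operator_set
    (K N : ℕ) (hN : 0 < N) (hK : N < K) (hX : ExcInvariant K N) :
    {G : Hspace K N →L[ℝ] Hspace K N |
        ∃ T ∈ clusterSpace K N hX, NormedSpace.exp T = G} =
      Gset K N hX := by
  have hNK : N ≤ K := le_of_lt hK
  ext G
  constructor
  · rintro ⟨T, hT, rfl⟩
    obtain ⟨C, hC, hCeq⟩ := exp_cluster_eq_one_add K N hNK hX T hT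
    exact ⟨C, hC, hCeq⟩
  · rintro ⟨C, hC, rfl⟩
    obtain ⟨T, hT, hTeq⟩ := one_add_cluster_eq_exp K N hNK hX C hC
    exact ⟨T, hT, hTeq⟩

end CC
end
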